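/- Let σ, γ > 0, a > 0, c_∞ ≥ 0, τ : [0,∞) → [0,∞), and let Q_γ be the sticky kernel on [0,∞) driven by τ. Then for any w ≥ 0, ∫ (e^{a w̃} − 1) Q_γ(w, dw̃) equals e^{2a²σ²γ}[ e^{a(τ(w)+γc_∞)} ( Φ((τ(w)+γc_∞)/(2σγ^{1/2}) + 2σγ^{1/2}a) − Φ(−(τ(w)+γc_∞)/(2σγ^{1/2}) + 2σγ^{1/2}a) ) + 2 sinh(a(τ(w)+γc_∞)) Φ(−(τ(w)+γc_∞)/(2σγ^{1/2}) + 2σγ^{1/2}a) ] − 1 + 2Φ(−(τ(w)+γc_∞)/(2σγ^{1/2})). -/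

import Mathlib

/-!
Write `s = σ√γ`, `m = t / (2s)` and `β = 2sa`. The ratio of Gaussian densities in `p̄` is
`e^{2m(g - m)}`, so for `t ≥ 0` the kernel moves only when `g < m`, and there
`1 - p̄ = 1 - e^{2m(g - m)}`. The integrand `(e^{β(m - g)} - 1)(1 - e^{2m(g - m)}) φ(g)` splits
into four terms `e^{bg + c} φ(g)`, and completing the square turns each integral over `g < m`
into `e^{b²/2 + c} Φ(m - b)`; `Φ(m) + Φ(-m) = 1` then gives the stated closed form.
-/

open MeasureTheory

/-- Standard Gaussian density. -/
noncomputable def stdG (g : ℝ) : ℝ :=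
  (Real.sqrt (2 * Real.pi))⁻¹ * Real.exp (-g ^ 2 / 2)

/-- Standard Gaussian cumulative distribution function. -/
noncomputable def Phi (x : ℝ) : ℝ := ∫ u in Set.Iio x, stdG u

/-- Density of the one-dimensional centered Gaussian with variance `v`. -/
noncomputable def gpdf (v x : ℝ) : ℝ :=
  (Real.sqrt (2 * Real.pi * v))⁻¹ * Real.exp (-x ^ 2 / (2 * v))

/-- `p̄(t, g) = min(1, φ_v(t − √v g)/φ_v(√v g))` with `v = σ²γ`. -/
noncomputable def pbar (σ γ t g : ℝ) : ℝ :=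
  min 1 (gpdf (σ ^ 2 * γ) (t - σ * Real.sqrt γ * g) /
    gpdf (σ ^ 2 * γ) (σ * Real.sqrt γ * g))

open Real Set

lemma stdG_neg (x : ℝ) : stdG (-x) = stdG x := by
  rw [stdG, stdG, neg_sq]

lemma stdG_eq_mul_exp_neg_mul_sq (g : ℝ) :
    stdG g = (√(2 * π))⁻¹ * exp (-(1 / 2) * g ^ 2) := by
  rw [stdG, neg_div, neg_mul, one_div_mul_eq_div]

lemma integrable_stdG : Integrable stdG := by
  simp only [funext stdG_eq_mul_exp_neg_mul_sq]
  exact (integrable_exp_neg_mul_sq (by norm_num)).const_mul _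

lemma integral_stdG : ∫ g, stdG g = 1 := by
  simp only [stdG_eq_mul_exp_neg_mul_sq, integral_const_mul, integral_gaussian]
  rw [div_div_eq_mul_div, div_one, mul_comm π, inv_mul_cancel₀ (by positivity)]

lemma exp_affine_mul_stdG (b c g : ℝ) :
    exp (b * g + c) * stdG g = exp (b ^ 2 / 2 + c) * stdG (g - b) := by
  simp only [stdG]
  rw [mul_left_comm, mul_left_comm (exp _), ← exp_add, ← exp_add]
  ring_nf

lemma integrable_exp_affine_mul_stdG (b c : ℝ) :
    Integrable fun g => exp (b * g + c) * stdG g := by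
  simp only [exp_affine_mul_stdG b c]
  exact (integrable_stdG.comp_sub_right b).const_mul _

lemma setIntegral_Iio_comp_sub_right (f : ℝ → ℝ) (b m : ℝ) :
    ∫ g in Iio m, f (g - b) = ∫ g in Iio (m - b), f g := by
  have h := (measurePreserving_sub_right volume b).setIntegral_preimage_emb
    (measurableEmbedding_subRight b) f (Iio (m - b))
  rwa [preimage_sub_const_Iio, sub_add_cancel] at h

lemma setIntegral_Iio_exp_affine_mul_stdG (b c m : ℝ) :
    ∫ g in Iio m, exp (b * g + c) * stdG g = exp (b ^ 2 / 2 + c) * Phi (m - b) := by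
  simp only [exp_affine_mul_stdG b c, integral_const_mul, setIntegral_Iio_comp_sub_right]
  rfl

lemma Phi_add_Phi_neg (m : ℝ) : Phi m + Phi (-m) = 1 := by
  have h : Phi (-m) = ∫ g in Ici m, stdG g := by
    rw [Phi, setIntegral_congr_set Iio_ae_eq_Iic, ← integral_comp_neg_Ioi,
      integral_Ici_eq_integral_Ioi]
    simp only [stdG_neg]
  rw [h, Phi, ← compl_Iio, integral_add_compl measurableSet_Iio integrable_stdG, integral_stdG]

lemma gpdf_sub_div_gpdf {v : ℝ} (hv : 0 < v) (t x : ℝ) :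
    gpdf v (t - x) / gpdf v x = exp (t * (2 * x - t) / (2 * v)) := by
  rw [gpdf, gpdf, mul_div_mul_left _ _ (by positivity), ← exp_sub]
  ring_nf

lemma pbar_eq_min_one_exp {σ γ : ℝ} (hσ : 0 < σ) (hγ : 0 < γ) (t g : ℝ) :
    pbar σ γ t g = min 1 (exp (2 * (t / (2 * σ * √γ)) * (g - t / (2 * σ * √γ)))) := by
  have hs : 0 < σ * √γ := by positivity
  have hvar : σ ^ 2 * γ = (σ * √γ) ^ 2 := by rw [mul_pow, sq_sqrt hγ.le]
  rw [pbar, gpdf_sub_div_gpdf (by positivity), hvar]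
  congr 2
  field_simp

lemma exp_sub_one_mul_one_sub_exp_mul_stdG (β m g : ℝ) :
    (exp (β * (m - g)) - 1) * (1 - exp (2 * m * (g - m))) * stdG g =
      exp (-β * g + β * m) * stdG g - exp (0 * g + 0) * stdG g
        - exp ((2 * m - β) * g + (β * m - 2 * m ^ 2)) * stdG g
        + exp (2 * m * g + -(2 * m ^ 2)) * stdG g := by
  have hprod : exp ((2 * m - β) * g + (β * m - 2 * m ^ 2)) =
      exp (β * (m - g)) * exp (2 * m * (g - m)) := by
    rw [← exp_add]; ring_nf
  rw [hprod, show -β * g + β * m = β * (m - g) by ring,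
    show 2 * m * g + -(2 * m ^ 2) = 2 * m * (g - m) by ring, zero_mul, add_zero, exp_zero]
  ring

lemma setIntegral_Iio_exp_sub_one_mul_one_sub_exp_mul_stdG (β m : ℝ) :
    ∫ g in Iio m, (exp (β * (m - g)) - 1) * (1 - exp (2 * m * (g - m))) * stdG g =
      exp (β ^ 2 / 2) * (exp (β * m) * Phi (m + β) - exp (-(β * m)) * Phi (-m + β))
        - 1 + 2 * Phi (-m) := by
  have hint (b c : ℝ) : IntegrableOn (fun g => exp (b * g + c) * stdG g) (Iio m) :=
    (integrable_exp_affine_mul_stdG b c).integrableOn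
  simp only [exp_sub_one_mul_one_sub_exp_mul_stdG]
  rw [integral_add, integral_sub, integral_sub]
  all_goals try exact hint _ _
  all_goals try exact (hint _ _).sub (hint _ _)
  all_goals try exact ((hint _ _).sub (hint _ _)).sub (hint _ _)
  simp only [setIntegral_Iio_exp_affine_mul_stdG]
  have hΦ := Phi_add_Phi_neg m
  rw [show m - -β = m + β by ring, show m - (2 * m - β) = -m + β by ring,
    show m - 2 * m = -m by ring, show m - 0 = m by ring,
    show (2 * m - β) ^ 2 / 2 + (β * m - 2 * m ^ 2) = β ^ 2 / 2 + -(β * m) by ring,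
    show (2 * m) ^ 2 / 2 + -(2 * m ^ 2) = 0 by ring, neg_sq]
  simp only [zero_pow two_ne_zero, zero_div, exp_zero, exp_add]
  linear_combination -hΦ

lemma integral_exp_sub_one_mul_one_sub_min_one_exp_mul_stdG {m : ℝ} (hm : 0 ≤ m) (β : ℝ) :
    ∫ g, (exp (β * (m - g)) - 1) * (1 - min 1 (exp (2 * m * (g - m)))) * stdG g =
      exp (β ^ 2 / 2) * (exp (β * m) * (Phi (m + β) - Phi (-m + β)) +
        2 * sinh (β * m) * Phi (-m + β)) - 1 + 2 * Phi (-m) := by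
  have hreject : ∀ g ∉ Iio m,
      (exp (β * (m - g)) - 1) * (1 - min 1 (exp (2 * m * (g - m)))) * stdG g = 0 := by
    intro g hg
    rw [min_eq_left (one_le_exp (mul_nonneg (by positivity) (by simpa using hg))), sub_self,
      mul_zero, zero_mul]
  have hbelow : EqOn
      (fun g => (exp (β * (m - g)) - 1) * (1 - min 1 (exp (2 * m * (g - m)))) * stdG g)
      (fun g => (exp (β * (m - g)) - 1) * (1 - exp (2 * m * (g - m))) * stdG g) (Iio m) := by
    intro g hg
    dsimp only
    rw [min_eq_right (exp_le_one_iff.mpr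
      (mul_nonpos_of_nonneg_of_nonpos (by positivity) (by linarith [mem_Iio.mp hg])))]
  rw [← setIntegral_eq_integral_of_forall_compl_eq_zero hreject,
    setIntegral_congr_fun measurableSet_Iio hbelow,
    setIntegral_Iio_exp_sub_one_mul_one_sub_exp_mul_stdG, sinh_eq]
  ring

theorem sticky_exponential_moment_general (σ γ a c : ℝ) (τ : ℝ → ℝ)
    (hσ : 0 < σ) (hγ : 0 < γ) (hc : 0 ≤ c)
    (hτ0 : ∀ w, 0 ≤ w → 0 ≤ τ w) (w : ℝ) (hw : 0 ≤ w) :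
    (∫ g : ℝ, pbar σ γ (τ w + γ * c) g * stdG g) * (Real.exp (a * 0) - 1) +
      (∫ g : ℝ,
        (Real.exp (a * (τ w + γ * c - 2 * σ * Real.sqrt γ * g)) - 1) *
          (1 - pbar σ γ (τ w + γ * c) g) * stdG g)
    = Real.exp (2 * a ^ 2 * σ ^ 2 * γ) *
        (Real.exp (a * (τ w + γ * c)) *
          (Phi ((τ w + γ * c) / (2 * σ * Real.sqrt γ) + 2 * σ * Real.sqrt γ * a) -
            Phi (-((τ w + γ * c) / (2 * σ * Real.sqrt γ)) + 2 * σ * Real.sqrt γ * a)) +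
          2 * Real.sinh (a * (τ w + γ * c)) *
            Phi (-((τ w + γ * c) / (2 * σ * Real.sqrt γ)) + 2 * σ * Real.sqrt γ * a))
      - 1 + 2 * Phi (-((τ w + γ * c) / (2 * σ * Real.sqrt γ))) := by
  have ht : 0 ≤ τ w + γ * c := add_nonneg (hτ0 w hw) (mul_nonneg hγ.le hc)
  have hs : 0 < 2 * σ * √γ := by positivity
  set t := τ w + γ * c
  have hjump : ∀ g, a * (t - 2 * σ * √γ * g) =
      2 * σ * √γ * a * (t / (2 * σ * √γ) - g) := fun g => by field_simp
  have hvar : 2 * a ^ 2 * σ ^ 2 * γ = (2 * σ * √γ * a) ^ 2 / 2 := by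
    rw [mul_pow, mul_pow, mul_pow, sq_sqrt hγ.le]; ring
  have hdrift : a * t = 2 * σ * √γ * a * (t / (2 * σ * √γ)) := by field_simp
  simp only [mul_zero, exp_zero, sub_self, zero_add, pbar_eq_min_one_exp hσ hγ, hjump]
  rw [integral_exp_sub_one_mul_one_sub_min_one_exp_mul_stdG (div_nonneg ht hs.le), hvar, hdrift]

/-- The exact exponential-moment formula for one sticky step: the kernel `Q_γ` jumps
to `0` with probability `p̄(t, g)` (so `e^{a·0} − 1` there) and otherwise moves to
`t − 2σ√γ g`, where `t = τ(w) + γ c_∞` and `g` is standard Gaussian. -/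
theorem sticky_exponential_moment (σ γ a c : ℝ) (τ : ℝ → ℝ)
    (hσ : 0 < σ) (hγ : 0 < γ) (ha : 0 < a) (hc : 0 ≤ c)
    (hτ0 : ∀ w, 0 ≤ w → 0 ≤ τ w) (w : ℝ) (hw : 0 ≤ w) :
    (∫ g : ℝ, pbar σ γ (τ w + γ * c) g * stdG g) * (Real.exp (a * 0) - 1) +
      (∫ g : ℝ,
        (Real.exp (a * (τ w + γ * c - 2 * σ * Real.sqrt γ * g)) - 1) *
          (1 - pbar σ γ (τ w + γ * c) g) * stdG g)
    = Real.exp (2 * a ^ 2 * σ ^ 2 * γ) *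
        (Real.exp (a * (τ w + γ * c)) *
          (Phi ((τ w + γ * c) / (2 * σ * Real.sqrt γ) + 2 * σ * Real.sqrt γ * a) -
            Phi (-((τ w + γ * c) / (2 * σ * Real.sqrt γ)) + 2 * σ * Real.sqrt γ * a)) +
          2 * Real.sinh (a * (τ w + γ * c)) *
            Phi (-((τ w + γ * c) / (2 * σ * Real.sqrt γ)) + 2 * σ * Real.sqrt γ * a))
      - 1 + 2 * Phi (-((τ w + γ * c) / (2 * σ * Real.sqrt γ))) :=
  sticky_exponential_moment_general σ γ a c τ hσ hγ hc hτ0 w hw
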